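/- arXiv:1612.05717 — 6 statements merged into one kernel-verified Lean document; each statement's English description precedes it below -/
import Mathlib

section
/- For any finite set S of points in F^d, there exists a nonzero polynomial Q in F[x_1,...,x_d] of degree at most C(d) * |S|^(1/d) vanishing at every point of S. -/
/-!
Polynomials in `d` variables with every exponent at most `k` form a space of dimension
`(k + 1) ^ d`, so evaluation on a set of fewer than `(k + 1) ^ d` points has a nonzero kernel
element, of total degree at most `d * k`. Taking `k = ⌊|S| ^ (1 / d)⌋` gives the bound with
`C = d`.
-/

open Module

namespace MvPolynomial

variable {σ : Type*} [Fintype σ]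

theorem finrank_restrictDegree (R : Type*) [CommRing R] [StrongRankCondition R] (k : ℕ) :
    finrank R (restrictDegree σ R k) = (k + 1) ^ Fintype.card σ := by
  classical
  have basis : Basis {s : σ →₀ ℕ | ∀ i, s i ≤ k} R (restrictDegree σ R k) :=
    basisRestrictSupport R _
  rw [finrank_eq_nat_card_basis basis, ← Fintype.card_fin (k + 1), ← Fintype.card_fun,
    ← Nat.card_eq_fintype_card]
  refine Nat.card_congr <| (Finsupp.equivFunOnFinite.subtypeEquiv fun _ => ?_).trans <|
    Equiv.subtypePiEquivPi.trans (Equiv.arrowCongr (Equiv.refl σ) Fin.equivSubtype.symm)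
  simp

theorem totalDegree_le_of_mem_restrictDegree {R : Type*} [CommSemiring R] {k : ℕ}
    {p : MvPolynomial σ R} (hp : p ∈ restrictDegree σ R k) :
    p.totalDegree ≤ Fintype.card σ * k := by
  refine Finset.sup_le fun s hs => ?_
  rw [Finsupp.sum_fintype _ _ fun _ => rfl]
  exact (Finset.sum_le_card_nsmul _ _ _ fun i _ =>
    (mem_restrictDegree _ _ _).mp hp s hs i).trans_eq (by simp)

theorem exists_ne_zero_mem_restrictDegree_eval_eq_zero {F : Type*} [Field F]
    (S : Finset (σ → F)) {k : ℕ} (hS : S.card < (k + 1) ^ Fintype.card σ) :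
    ∃ p ∈ restrictDegree σ F k, p ≠ 0 ∧ ∀ x ∈ S, eval x p = 0 := by
  let evalOnS : restrictDegree σ F k →ₗ[F] S → F :=
    LinearMap.funLeft F F ((↑) : S → σ → F) ∘ₗ evalₗ F σ ∘ₗ
      (restrictDegree σ F k).subtype
  have hker : LinearMap.ker evalOnS ≠ ⊥ := LinearMap.ker_ne_bot_of_finrank_lt <| by
    rwa [finrank_restrictDegree, finrank_fintype_fun_eq_card, Fintype.card_coe]
  obtain ⟨⟨p, hp⟩, hp_ker, hp0⟩ := (Submodule.ne_bot_iff _).mp hker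
  exact ⟨p, hp, fun h => hp0 (Subtype.ext h), fun x hx => congrFun hp_ker ⟨x, hx⟩⟩

end MvPolynomial

theorem lt_natFloor_rpow_inv_add_one_pow {n d : ℕ} (hd : d ≠ 0) :
    n < (⌊(n : ℝ) ^ (d⁻¹ : ℝ)⌋₊ + 1) ^ d := by
  have hroot : ((n : ℝ) ^ (d⁻¹ : ℝ)) ^ d = n := Real.rpow_inv_natCast_pow n.cast_nonneg hd
  exact_mod_cast hroot ▸ pow_lt_pow_left₀ (Nat.lt_floor_add_one _) (by positivity) hd

/-- For any finite set `S` of points in `F^d` there is a nonzero polynomial of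
degree at most `C(d) * |S|^(1/d)` vanishing at every point of `S`. -/
theorem stmt1 (d : ℕ) (hd : 1 ≤ d) :
    ∃ C : ℝ, 0 < C ∧
      ∀ (F : Type) [Field F] (S : Finset (Fin d → F)),
        ∃ Q : MvPolynomial (Fin d) F, Q ≠ 0 ∧
          (Q.totalDegree : ℝ) ≤ C * (S.card : ℝ) ^ ((1 : ℝ) / (d : ℝ)) ∧
          ∀ x ∈ S, MvPolynomial.eval x Q = 0 := by
  refine ⟨d, by exact_mod_cast hd, fun F _ S => ?_⟩
  set k := ⌊(S.card : ℝ) ^ ((d : ℝ)⁻¹)⌋₊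
  have hS : S.card < (k + 1) ^ Fintype.card (Fin d) := by
    simpa using lt_natFloor_rpow_inv_add_one_pow (n := S.card) (by omega : d ≠ 0)
  obtain ⟨Q, hQ, hQ0, hQS⟩ := MvPolynomial.exists_ne_zero_mem_restrictDegree_eval_eq_zero S hS
  refine ⟨Q, hQ0, ?_, hQS⟩
  calc (Q.totalDegree : ℝ) ≤ d * k := by
        exact_mod_cast (MvPolynomial.totalDegree_le_of_mem_restrictDegree hQ).trans_eq (by simp)
    _ ≤ d * (S.card : ℝ) ^ ((1 : ℝ) / d) := by
        rw [one_div]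
        gcongr
        exact Nat.floor_le (by positivity)
end

section
/- Let Q be a nonzero polynomial in d variables over a field F, written Q = Σ_α x_1^{α_1} ··· x_{d-1}^{α_{d-1}} f_α(x_d), where α ranges over (d-1)-tuples of nonnegative integers. Let α_0 be a tuple with f_{α_0} ≠ 0 and |α_0| = α_{0,1}+···+α_{0,d-1} minimal among all α with f_α ≠ 0. For each p ∈ F, let m(p) denote the minimum over all such minimal-|α| tuples α of the multiplicity of p as a root of f_α. Then Σ_{p ∈ F} m(p) ≤ deg Q. -/
/-! Every `m(p)` is bounded by the multiplicity of `p` as a root of one fixed lowest slice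
`f_{α₀}`, so the sum is at most the number of roots of `f_{α₀}` counted with multiplicity,
hence at most `deg f_{α₀} ≤ deg Q`. -/

open MvPolynomial

/-- Writing `Q = ∑_α x^(α,0) f_α(x_d)`, `sliceAt Q α` is the one-variable
polynomial `f_α`. -/
noncomputable def sliceAt {F : Type} [Field F] {n : ℕ}
    (Q : MvPolynomial (Fin (n + 1)) F) (α : Fin n → ℕ) : Polynomial F :=
  ∑ k ∈ Finset.range (Q.totalDegree + 1),
    Polynomial.C (MvPolynomial.coeff (Finsupp.equivFunOnFinite.symm (Fin.snoc α k)) Q) *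
      Polynomial.X ^ k

/-- `α` is lowest: `f_α ≠ 0` with `|α|` minimal among tuples with `f_α ≠ 0`. -/
def IsLowest {F : Type} [Field F] {n : ℕ}
    (Q : MvPolynomial (Fin (n + 1)) F) (α : Fin n → ℕ) : Prop :=
  sliceAt Q α ≠ 0 ∧ ∀ α' : Fin n → ℕ, sliceAt Q α' ≠ 0 → ∑ i, α i ≤ ∑ i, α' i

/-- The `(P, l)`-multiplicity of `Q` where `l` is the `x_d`-axis and
`P = (0, …, 0, p)`: the minimum over lowest `α` of the multiplicity of `p`
as a root of `f_α`. -/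
noncomputable def axisMult {F : Type} [Field F] {n : ℕ}
    (Q : MvPolynomial (Fin (n + 1)) F) (p : F) : ℕ :=
  sInf {m : ℕ | ∃ α : Fin n → ℕ, IsLowest Q α ∧ m = (sliceAt Q α).rootMultiplicity p}

theorem Multiset.sum_count_le_card {ι : Type*} [DecidableEq ι] (s : Finset ι) (m : Multiset ι) :
    ∑ a ∈ s, m.count a ≤ card m :=
  calc ∑ a ∈ s, m.count a ≤ ∑ a ∈ s ∪ m.toFinset, m.count a :=
        Finset.sum_le_sum_of_subset Finset.subset_union_left
    _ = card m := sum_count_eq_card fun _ ha => Finset.mem_union_right _ (mem_toFinset.2 ha)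

theorem Polynomial.sum_rootMultiplicity_le_natDegree {R : Type*} [CommRing R] [IsDomain R]
    (f : Polynomial R) (s : Finset R) : ∑ a ∈ s, f.rootMultiplicity a ≤ f.natDegree := by
  classical
  calc ∑ a ∈ s, f.rootMultiplicity a = ∑ a ∈ s, f.roots.count a := by
        simp only [Polynomial.count_roots]
    _ ≤ Multiset.card f.roots := Multiset.sum_count_le_card s f.roots
    _ ≤ f.natDegree := Polynomial.card_roots' f

section Slices

variable {F : Type} [Field F] {n : ℕ}

theorem coeff_sliceAt (Q : MvPolynomial (Fin (n + 1)) F) (α : Fin n → ℕ) {k : ℕ}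
    (hk : k ≤ Q.totalDegree) :
    (sliceAt Q α).coeff k = coeff (Finsupp.equivFunOnFinite.symm (Fin.snoc α k)) Q := by
  rw [sliceAt, Polynomial.finsetSum_coeff,
    Finset.sum_eq_single_of_mem k (Finset.mem_range.2 (Nat.lt_succ_of_le hk))]
  · simp
  · intro j _ hjk
    simp [Polynomial.coeff_X_pow, Ne.symm hjk]

theorem natDegree_sliceAt_le (Q : MvPolynomial (Fin (n + 1)) F) (α : Fin n → ℕ) :
    (sliceAt Q α).natDegree ≤ Q.totalDegree :=
  Polynomial.natDegree_sum_le_of_forall_le _ _ fun k hk =>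
    (Polynomial.natDegree_C_mul_X_pow_le _ k).trans (Nat.lt_succ_iff.1 (Finset.mem_range.1 hk))

theorem sliceAt_init_ne_zero {Q : MvPolynomial (Fin (n + 1)) F} {m : Fin (n + 1) →₀ ℕ}
    (hm : m ∈ Q.support) : sliceAt Q (Fin.init m) ≠ 0 := by
  have hlast : m (Fin.last n) ≤ Q.totalDegree :=
    (Finsupp.le_degree _ m).trans (le_totalDegree hm)
  intro h
  have hcoeff := coeff_sliceAt Q (Fin.init m) hlast
  rw [h, Fin.snoc_init_self, Finsupp.equivFunOnFinite_symm_coe] at hcoeff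
  exact mem_support_iff.1 hm hcoeff.symm

theorem exists_isLowest {Q : MvPolynomial (Fin (n + 1)) F} (hQ : Q ≠ 0) :
    ∃ α, IsLowest Q α := by
  classical
  have hex : ∃ d α, sliceAt Q α ≠ 0 ∧ ∑ i, α i = d := by
    obtain ⟨m, hm⟩ := support_nonempty.2 hQ
    exact ⟨_, _, sliceAt_init_ne_zero hm, rfl⟩
  obtain ⟨α, hα, hαsum⟩ := Nat.find_spec hex
  refine ⟨α, hα, fun α' hα' => ?_⟩
  rw [hαsum]
  exact Nat.find_min' hex ⟨α', hα', rfl⟩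

theorem axisMult_le_rootMultiplicity {Q : MvPolynomial (Fin (n + 1)) F} {α : Fin n → ℕ}
    (hα : IsLowest Q α) (p : F) : axisMult Q p ≤ (sliceAt Q α).rootMultiplicity p :=
  Nat.sInf_le ⟨α, hα, rfl⟩

end Slices

theorem stmt2_general {F : Type} [Field F] {n : ℕ}
    (Q : MvPolynomial (Fin (n + 1)) F) (hQ : Q ≠ 0) :
    ∀ s : Finset F, ∑ p ∈ s, axisMult Q p ≤ Q.totalDegree := by
  intro s
  obtain ⟨α, hα⟩ := exists_isLowest hQ
  calc ∑ p ∈ s, axisMult Q p ≤ ∑ p ∈ s, (sliceAt Q α).rootMultiplicity p :=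
        Finset.sum_le_sum fun p _ => axisMult_le_rootMultiplicity hα p
    _ ≤ (sliceAt Q α).natDegree := Polynomial.sum_rootMultiplicity_le_natDegree _ s
    _ ≤ Q.totalDegree := natDegree_sliceAt_le Q α

/-- The Bézout-type inequality: `∑_{p ∈ F} m_Q(P, l) ≤ deg Q` along the
`x_d`-axis (stated via arbitrary finite partial sums). -/
theorem stmt2 {F : Type} [Field F] {n : ℕ} (hn : 1 ≤ n)
    (Q : MvPolynomial (Fin (n + 1)) F) (hQ : Q ≠ 0) :
    ∀ s : Finset F, ∑ p ∈ s, axisMult Q p ≤ Q.totalDegree :=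
  stmt2_general Q hQ
end

section
/- (Joints Theorem over an arbitrary field) Let L be a finite set of N lines in F^d with d ≥ 2, where F is any field. A joint of L is a point P such that there exist d lines of L through P whose direction vectors are linearly independent. Then the number of joints is at most C(d) * N^(d/(d-1)). -/
/-!
Polynomial method. Fewer than `(K + 1) ^ d` points lie in the zero set of a nonzero polynomial of
degree at most `d K` (count monomials). If `p ≠ 0` vanishes on the joints and every line carries
more than `deg p` joints, then `p` vanishes on the lines, so its gradient vanishes at every joint,
where the lines span `F^d`. A nonzero partial derivative has smaller degree; if all partials
vanish identically, the characteristic is a prime `q` and `p (x) = g (x ^ q)`, where `g` has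
smaller degree and vanishes on the coordinatewise Frobenius image of the joints, again a joint
configuration of the same kind. Induction on the degree shows that some line carries at most
`d K` joints, with `K ≈ m ^ (1 / d)` for `m` joints. Removing that line and repeating gives
`m ≤ d N m ^ (1 / d)`, i.e. `m ≤ (d N) ^ (d / (d - 1))`.
-/

def IsLine {F : Type} [Field F] {d : ℕ} (s : Set (Fin d → F)) : Prop :=
  ∃ a v : Fin d → F, v ≠ 0 ∧ s = {x | ∃ t : F, x = a + t • v}

def lineThrough {F : Type} [Field F] {d : ℕ} (P v : Fin d → F) : Set (Fin d → F) :=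
  {x | ∃ t : F, x = P + t • v}

open MvPolynomial Finset
open scoped Polynomial

lemma linearIndependent_ringHom_comp {K L ι : Type*} [Field K] [Field L] [Fintype ι]
    [DecidableEq ι] (f : K →+* L) {v : ι → ι → K} (hv : LinearIndependent K v) :
    LinearIndependent L fun i => f ∘ v i :=
  Matrix.linearIndependent_rows_iff_isUnit.mpr
    ((Matrix.linearIndependent_rows_iff_isUnit.mp hv).map f.mapMatrix)

lemma Polynomial.encard_setOf_eval_eq_zero_le {F : Type*} [Field F] {p : F[X]} (hp : p ≠ 0) :
    {t | p.eval t = 0}.encard ≤ p.natDegree := by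
  have hroots : {t | p.eval t = 0} = p.rootSet F := by
    ext t
    simp [Polynomial.mem_rootSet, hp]
  rw [hroots, ← (p.rootSet_finite F).cast_ncard_eq]
  exact_mod_cast p.ncard_rootSet_le F

namespace MvPolynomial

section CommRing

variable {R σ : Type*} [CommRing R]

lemma totalDegree_pderiv_lt [NoZeroDivisors R] {p : MvPolynomial σ R} {j : σ}
    (h : pderiv j p ≠ 0) : (pderiv j p).totalDegree < p.totalDegree := by
  have key : ∀ m ∈ (pderiv j p).support, (m.sum fun _ e => e) < p.totalDegree := fun m hm => by
    rw [mem_support_iff, coeff_pderiv] at hm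
    refine lt_of_lt_of_le ?_ (le_totalDegree (mem_support_iff.mpr (left_ne_zero_of_mul hm)))
    rw [Finsupp.sum_add_index' (fun _ => rfl) (fun _ _ _ => rfl)]
    simp
  obtain ⟨m, hm⟩ := nonempty_iff_ne_empty.mpr (mt support_eq_empty.mp h)
  exact (Finset.sup_lt_iff ((Nat.zero_le _).trans_lt (key m hm))).mpr key

lemma ringChar_dvd_of_forall_pderiv_eq_zero [IsDomain R] {p : MvPolynomial σ R}
    (hp : ∀ j, pderiv j p = 0) {m : σ →₀ ℕ} (hm : m ∈ p.support) (j : σ) :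
    ringChar R ∣ m j := by
  obtain hmj | hmj := eq_or_ne (m j) 0
  · simp [hmj]
  set m' := m - Finsupp.single j 1
  have hm' : m' + Finsupp.single j 1 = m := tsub_add_cancel_of_le <| by
    simpa [Finsupp.single_le_iff, Nat.one_le_iff_ne_zero] using hmj
  have hcoeff := coeff_pderiv (i := j) p m'
  rw [hp, coeff_zero, hm', eq_comm, mul_eq_zero] at hcoeff
  refine ringChar.dvd ?_
  rw [← hm', Finsupp.add_apply, Finsupp.single_eq_same, Nat.cast_add, Nat.cast_one]
  exact hcoeff.resolve_left (mem_support_iff.mp hm)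

lemma exists_expand_eq_of_dvd {p : MvPolynomial σ R} {q : ℕ}
    (h : ∀ m ∈ p.support, ∀ j, q ∣ m j) : ∃ g, expand q g = p := by
  refine ⟨∑ m ∈ p.support, monomial (m.mapRange (· / q) (Nat.zero_div q)) (coeff m p), ?_⟩
  conv_rhs => rw [p.as_sum]
  rw [map_sum]
  refine sum_congr rfl fun m hm => ?_
  rw [expand_monomial]
  congr
  ext j
  simp [Nat.mul_div_cancel' (h m hm j)]

noncomputable def restrictLine (x v : σ → R) : MvPolynomial σ R →ₐ[R] R[X] :=
  aeval fun j => Polynomial.C (v j) * Polynomial.X + Polynomial.C (x j)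

lemma restrictLine_X (x v : σ → R) (j : σ) :
    restrictLine x v (X j) = Polynomial.C (v j) * Polynomial.X + Polynomial.C (x j) :=
  aeval_X _ _

lemma eval_restrictLine (x v : σ → R) (p : MvPolynomial σ R) (t : R) :
    (restrictLine x v p).eval t = eval (x + t • v) p := by
  rw [← Polynomial.coe_aeval_eq_eval, ← AlgHom.comp_apply, restrictLine, comp_aeval,
    aeval_eq_eval]
  congr 2
  funext j
  simp only [map_add, map_mul, Polynomial.aeval_C, Polynomial.aeval_X, Pi.add_apply,
    Pi.smul_apply, smul_eq_mul, Algebra.algebraMap_self, RingHom.id_apply]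
  ring

lemma natDegree_restrictLine_le (x v : σ → R) (p : MvPolynomial σ R) :
    (restrictLine x v p).natDegree ≤ p.totalDegree := by
  conv_lhs => rw [p.as_sum, map_sum]
  refine Polynomial.natDegree_sum_le_of_forall_le _ _ fun s hs => ?_
  rw [restrictLine, aeval_monomial]
  refine (Polynomial.natDegree_C_mul_le _ _).trans <| (Polynomial.natDegree_prod_le _ _).trans ?_
  refine le_trans ?_ (le_totalDegree hs)
  exact sum_le_sum fun j _ =>
    (Polynomial.natDegree_pow_le_of_le _ Polynomial.natDegree_linear_le).trans_eq (mul_one _)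

lemma derivative_restrictLine [Fintype σ] (x v : σ → R) (p : MvPolynomial σ R) :
    Polynomial.derivative (restrictLine x v p) =
      ∑ j, Polynomial.C (v j) * restrictLine x v (pderiv j p) := by
  classical
  induction p using MvPolynomial.induction_on with
  | C c => simp [restrictLine]
  | add p q hp hq => simp only [map_add, hp, hq, mul_add, sum_add_distrib]
  | mul_X p i hp =>
    simp only [map_mul, Polynomial.derivative_mul, hp, pderiv_mul, pderiv_X, restrictLine_X,
      mul_add, map_add, sum_add_distrib, sum_mul, Pi.single_apply]
    simp only [apply_ite, map_one, map_zero, mul_one, mul_zero, sum_ite_eq, mem_univ, if_true,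
      Polynomial.derivative_C, Polynomial.derivative_X, zero_mul, mul_assoc]
    ring

end CommRing

variable {F σ : Type*} [Field F]

lemma restrictLine_eq_zero_of_totalDegree_lt {x v : σ → F} {p : MvPolynomial σ F}
    (hp : (p.totalDegree : ℕ∞) < {t : F | eval (x + t • v) p = 0}.encard) :
    restrictLine x v p = 0 := by
  by_contra hne
  have hdeg : ((restrictLine x v p).natDegree : ℕ∞) ≤ p.totalDegree := by
    exact_mod_cast natDegree_restrictLine_le x v p
  refine (Polynomial.encard_setOf_eval_eq_zero_le hne).not_gt (hdeg.trans_lt ?_)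
  simpa only [eval_restrictLine] using hp

lemma eval_pderiv_eq_zero_of_restrictLine_eq_zero [Fintype σ] [DecidableEq σ] {x : σ → F}
    {v : σ → σ → F} (hv : LinearIndependent F v) {p : MvPolynomial σ F}
    (hp : ∀ i, restrictLine x (v i) p = 0) (j : σ) : eval x (pderiv j p) = 0 := by
  have hdir : (Matrix.of v).mulVec (fun j => eval x (pderiv j p)) = 0 := by
    ext i
    have := congrArg (Polynomial.eval 0) (derivative_restrictLine x (v i) p)
    simpa [hp i, Polynomial.eval_finsetSum, eval_restrictLine, Matrix.mulVec, dotProduct]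
      using this.symm
  have hunit : IsUnit (Matrix.of v) := Matrix.linearIndependent_rows_iff_isUnit.mp hv
  exact congrFun (Matrix.mulVec_injective_iff_isUnit.mpr hunit
    (hdir.trans (Matrix.mulVec_zero _).symm)) j

lemma exists_ne_zero_totalDegree_le_forall_eval_eq_zero [Fintype σ]
    (T : Finset (σ → F)) (k : ℕ) (hT : #T < (k + 1) ^ Fintype.card σ) :
    ∃ p : MvPolynomial σ F, p ≠ 0 ∧ p.totalDegree ≤ Fintype.card σ * k ∧
      ∀ x ∈ T, eval x p = 0 := by
  classical
  let exps : (σ → Fin (k + 1)) → σ →₀ ℕ :=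
    Finsupp.equivFunOnFinite.symm ∘ (Fin.val ∘ ·)
  have hexps : Function.Injective exps :=
    Finsupp.equivFunOnFinite.symm.injective.comp Fin.val_injective.comp_left
  let mono := basisMonomials σ F ∘ exps
  have hli : LinearIndependent F mono := (basisMonomials σ F).linearIndependent.comp exps hexps
  let Φ : ((σ → Fin (k + 1)) → F) →ₗ[F] T → F :=
    LinearMap.pi (fun x : T => (aeval x.1).toLinearMap) ∘ₗ Fintype.linearCombination F mono
  obtain ⟨c, hc, hc0⟩ := Submodule.exists_mem_ne_zero_of_ne_bot
    (LinearMap.ker_ne_bot_of_finrank_lt (f := Φ) (by simpa using hT))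
  refine ⟨Fintype.linearCombination F mono c, fun h => hc0 ?_, ?_,
    fun x hx => congrFun (LinearMap.mem_ker.mp hc) ⟨x, hx⟩⟩
  · rw [Fintype.linearCombination_apply] at h
    ext e
    exact Fintype.linearIndependent_iff.mp hli c h e
  · rw [Fintype.linearCombination_apply]
    refine (totalDegree_finsetSum _ _).trans (Finset.sup_le fun e _ => ?_)
    refine (totalDegree_smul_le _ _).trans ?_
    rw [show mono e = monomial (exps e) 1 from congrFun (coe_basisMonomials σ F) _]
    refine (totalDegree_monomial_le _ _).trans ?_
    rw [Finsupp.sum_fintype _ _ fun _ => rfl]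
    simpa [exps] using Finset.sum_le_sum fun j (_ : j ∈ univ) => Nat.lt_succ_iff.mp (e j).isLt

end MvPolynomial

section RichJointSet

variable {F σ : Type*} [Field F] [Fintype σ]

def IsRichJointSet (n : ℕ) (J : Set (σ → F)) : Prop :=
  ∀ x ∈ J, ∃ v : σ → σ → F, LinearIndependent F v ∧
    ∀ i, (n : ℕ∞) < {t : F | x + t • v i ∈ J}.encard

namespace IsRichJointSet

variable {n : ℕ} {J : Set (σ → F)}

lemma eval_pderiv_eq_zero (hJ : IsRichJointSet n J) {p : MvPolynomial σ F}
    (hdeg : p.totalDegree ≤ n) (hvan : ∀ x ∈ J, eval x p = 0) {x : σ → F} (hx : x ∈ J)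
    (j : σ) : eval x (pderiv j p) = 0 := by
  classical
  obtain ⟨v, hv, hrich⟩ := hJ x hx
  refine eval_pderiv_eq_zero_of_restrictLine_eq_zero hv
    (fun i => restrictLine_eq_zero_of_totalDegree_lt ?_) j
  exact (Nat.cast_le.mpr hdeg).trans_lt
    ((hrich i).trans_le (Set.encard_le_encard fun t ht => hvan _ ht))

lemma image_pow (hJ : IsRichJointSet n J) (q : ℕ) [ExpChar F q] :
    IsRichJointSet n ((· ^ q) '' J) := by
  classical
  rintro _ ⟨x, hx, rfl⟩
  obtain ⟨v, hv, hrich⟩ := hJ x hx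
  refine ⟨fun i => v i ^ q, linearIndependent_ringHom_comp (frobenius F q) hv,
    fun i => (hrich i).trans_le ?_⟩
  rw [← (frobenius_inj F q).encard_image]
  refine Set.encard_le_encard ?_
  rintro _ ⟨t, ht, rfl⟩
  refine ⟨x + t • v i, ht, ?_⟩
  funext j
  simp [add_pow_expChar, mul_pow, frobenius_def]

theorem eq_empty_of_eval_eq_zero (hJ : IsRichJointSet n J) {p : MvPolynomial σ F} (hp : p ≠ 0)
    (hdeg : p.totalDegree ≤ n) (hvan : ∀ x ∈ J, eval x p = 0) : J = ∅ := by
  induction hk : p.totalDegree using Nat.strong_induction_on generalizing p J with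
  | _ k IH =>
  subst hk
  refine Set.eq_empty_iff_forall_notMem.mpr fun x₀ hx₀ => ?_
  by_cases hconst : p.totalDegree = 0
  · rw [totalDegree_eq_zero_iff_eq_C] at hconst
    have := hvan x₀ hx₀
    rw [hconst, eval_C] at this
    exact hp (hconst.trans (by rw [this, C_0]))
  by_cases hpd : ∃ j, pderiv j p ≠ 0
  · obtain ⟨j, hj⟩ := hpd
    have hlt := totalDegree_pderiv_lt hj
    refine (IH _ hlt hJ hj (hlt.le.trans hdeg)
      (fun x hx => hJ.eval_pderiv_eq_zero hdeg hvan hx j) rfl).subset hx₀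
  push Not at hpd
  obtain ⟨g, rfl⟩ :=
    exists_expand_eq_of_dvd fun _ hm => ringChar_dvd_of_forall_pderiv_eq_zero hpd hm
  rw [totalDegree_expand] at hconst hdeg
  have hq : (ringChar F).Prime :=
    (CharP.char_is_prime_or_zero F _).resolve_right (right_ne_zero_of_mul hconst)
  have : ExpChar F (ringChar F) := ExpChar.prime hq
  have hlt : g.totalDegree < g.totalDegree * ringChar F :=
    lt_mul_of_one_lt_right (Nat.pos_of_ne_zero (left_ne_zero_of_mul hconst)) hq.one_lt
  refine (IH _ (by rwa [totalDegree_expand]) (hJ.image_pow (ringChar F))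
    (fun hg => hp (by rw [hg, map_zero])) (hlt.le.trans hdeg) ?_ rfl).subset ⟨x₀, hx₀, rfl⟩
  rintro _ ⟨x, hx, rfl⟩
  rw [← eval_expand]
  exact hvan x hx

end IsRichJointSet

end RichJointSet

lemma lt_floor_rpow_inv_add_one_pow (m : ℕ) {d : ℕ} (hd : d ≠ 0) :
    m < (⌊(m : ℝ) ^ (d : ℝ)⁻¹⌋₊ + 1) ^ d := by
  have hpos : (0 : ℝ) ≤ (m : ℝ) ^ (d : ℝ)⁻¹ := by positivity
  have := pow_lt_pow_left₀ (Nat.lt_floor_add_one _) hpos hd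
  rw [Real.rpow_inv_natCast_pow (Nat.cast_nonneg m) hd] at this
  exact_mod_cast this

lemma le_rpow_of_le_mul_rpow_inv {m c : ℝ} {d : ℕ} (hd : 2 ≤ d) (hm : 0 ≤ m) (hc : 0 ≤ c)
    (h : m ≤ c * m ^ (d : ℝ)⁻¹) : m ≤ c ^ ((d : ℝ) / (d - 1)) := by
  obtain rfl | hm := hm.eq_or_lt
  · exact Real.rpow_nonneg hc _
  set a := m ^ (d : ℝ)⁻¹
  have ha : 0 < a := Real.rpow_pos_of_pos hm _
  have hma : a ^ d = m := Real.rpow_inv_natCast_pow hm.le (by omega)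
  have had : a ^ (d - 1) ≤ c := by
    refine le_of_mul_le_mul_right ?_ ha
    rwa [← pow_succ, Nat.sub_add_cancel (by omega), hma]
  have hd1 : 0 < (d : ℝ) - 1 := by
    have : (2 : ℝ) ≤ d := by exact_mod_cast hd
    linarith
  calc m = (a ^ (d - 1)) ^ ((d : ℝ) / (d - 1)) := by
        rw [← Real.rpow_natCast, ← Real.rpow_mul ha.le, Nat.cast_sub (by omega), Nat.cast_one,
          mul_div_cancel₀ _ hd1.ne', Real.rpow_natCast, hma]
    _ ≤ c ^ ((d : ℝ) / (d - 1)) :=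
        Real.rpow_le_rpow (pow_pos ha _).le had (div_nonneg (Nat.cast_nonneg d) hd1.le)

section Joints

variable {F : Type} [Field F] {d : ℕ}

def joints (L : Finset (Set (Fin d → F))) : Set (Fin d → F) :=
  {P | ∃ v : Fin d → (Fin d → F), LinearIndependent F v ∧ ∀ i, lineThrough P (v i) ∈ L}

lemma mem_lineThrough_self (P v : Fin d → F) : P ∈ lineThrough P v :=
  ⟨0, by simp⟩

lemma encard_setOf_add_smul_mem (J : Set (Fin d → F)) (x : Fin d → F) {v : Fin d → F}
    (hv : v ≠ 0) : {t : F | x + t • v ∈ J}.encard = (J ∩ lineThrough x v).encard := by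
  have hinj : Function.Injective fun t : F => x + t • v :=
    (add_right_injective x).comp (smul_left_injective F hv)
  rw [← hinj.encard_image]
  congr 1
  ext y
  constructor
  · rintro ⟨t, ht, rfl⟩
    exact ⟨ht, t, rfl⟩
  · rintro ⟨hy, t, rfl⟩
    exact ⟨t, hy, rfl⟩

lemma lineThrough_inter_lineThrough {ι : Type*} (x : Fin d → F) {v : ι → Fin d → F}
    (hv : LinearIndependent F v) {i j : ι} (hij : i ≠ j) :
    lineThrough x (v i) ∩ lineThrough x (v j) = {x} := by
  refine Set.Subset.antisymm ?_ (Set.singleton_subset_iff.mpr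
    ⟨mem_lineThrough_self x _, mem_lineThrough_self x _⟩)
  rintro _ ⟨⟨s, rfl⟩, t, hst⟩
  have hs := (LinearIndepOn.pair_iff v hij).mp (hv.linearIndepOn _) s (-t)
    (by rw [neg_smul, ← sub_eq_add_neg, sub_eq_zero]; exact add_left_cancel hst)
  simp [hs.1]

lemma finite_joints (hd : 2 ≤ d) (L : Finset (Set (Fin d → F))) : (joints L).Finite := by
  have hsub : joints L ⊆ ⋃ e ∈ (L ×ˢ L : Finset _), {x | e.1 ∩ e.2 = {x}} := by
    rintro x ⟨v, hv, hL⟩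
    let i₀ : Fin d := ⟨0, by omega⟩
    let i₁ : Fin d := ⟨1, by omega⟩
    have h01 : i₀ ≠ i₁ := by simp [i₀, i₁]
    exact Set.mem_biUnion (x := (lineThrough x (v i₀), lineThrough x (v i₁)))
      (mem_product.mpr ⟨hL i₀, hL i₁⟩) (lineThrough_inter_lineThrough x hv h01)
  refine ((L ×ˢ L).finite_toSet.biUnion fun e _ => ?_).subset hsub
  exact Set.Subsingleton.finite fun x hx y hy =>
    Set.singleton_eq_singleton_iff.mp (hx.symm.trans hy)

lemma joints_mono {L L' : Finset (Set (Fin d → F))} (h : L ⊆ L') : joints L ⊆ joints L' :=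
  fun _ ⟨v, hv, hL⟩ => ⟨v, hv, fun i => h (hL i)⟩

lemma joints_subset_joints_erase_union (L : Finset (Set (Fin d → F))) (l : Set (Fin d → F)) :
    joints L ⊆ joints (L.erase l) ∪ (joints L ∩ l) := by
  rintro x ⟨v, hv, hL⟩
  by_cases hx : x ∈ l
  · exact Or.inr ⟨⟨v, hv, hL⟩, hx⟩
  refine Or.inl ⟨v, hv, fun i => mem_erase.mpr ⟨?_, hL i⟩⟩
  rintro rfl
  exact hx (mem_lineThrough_self x (v i))

lemma exists_encard_joints_inter_le (L : Finset (Set (Fin d → F))) (hL : (joints L).Nonempty)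
    {p : MvPolynomial (Fin d) F} (hp : p ≠ 0) (hvan : ∀ x ∈ joints L, eval x p = 0) :
    ∃ l ∈ L, (joints L ∩ l).encard ≤ p.totalDegree := by
  by_contra! h
  refine hL.ne_empty (IsRichJointSet.eq_empty_of_eval_eq_zero ?_ hp le_rfl hvan)
  rintro x ⟨v, hv, hxL⟩
  exact ⟨v, hv, fun i => (encard_setOf_add_smul_mem _ x (hv.ne_zero i)).symm ▸ h _ (hxL i)⟩

lemma encard_joints_le (B : ℕ) (L₀ : Finset (Set (Fin d → F)))
    (hlight : ∀ L ⊆ L₀, (joints L).Nonempty → ∃ l ∈ L, (joints L ∩ l).encard ≤ B) :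
    (joints L₀).encard ≤ #L₀ * B := by
  induction L₀ using Finset.strongInduction with
  | H L IH =>
  obtain hL | hL := (joints L).eq_empty_or_nonempty
  · simp [hL]
  obtain ⟨l, hl, hlB⟩ := hlight L subset_rfl hL
  have hIH := IH (L.erase l) (erase_ssubset hl)
    fun L' hL' => hlight L' (hL'.trans (erase_subset l L))
  calc (joints L).encard ≤ (joints (L.erase l)).encard + (joints L ∩ l).encard :=
        (Set.encard_le_encard (joints_subset_joints_erase_union L l)).trans
          (Set.encard_union_le _ _)
    _ ≤ #(L.erase l) * B + B := add_le_add hIH hlB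
    _ = #L * B := by rw [← card_erase_add_one hl]; push_cast; ring

lemma ncard_joints_le_of_lt_pow (hd : 2 ≤ d)
    (L : Finset (Set (Fin d → F))) (K : ℕ) (hK : (joints L).ncard < (K + 1) ^ d) :
    (joints L).ncard ≤ #L * (d * K) := by
  have hlight : ∀ L' ⊆ L, (joints L').Nonempty →
      ∃ l ∈ L', (joints L' ∩ l).encard ≤ (d * K : ℕ) := by
    intro L' hL' hne
    have hfin := finite_joints hd L'
    have hcard : #hfin.toFinset < (K + 1) ^ Fintype.card (Fin d) := by
      rw [← Set.ncard_eq_toFinset_card _ hfin, Fintype.card_fin]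
      exact (Set.ncard_le_ncard (joints_mono hL') (finite_joints hd L)).trans_lt hK
    obtain ⟨p, hp, hdeg, hvan⟩ := exists_ne_zero_totalDegree_le_forall_eval_eq_zero _ K hcard
    obtain ⟨l, hl, hlp⟩ := exists_encard_joints_inter_le L' hne hp
      fun x hx => hvan x (hfin.mem_toFinset.mpr hx)
    rw [Fintype.card_fin] at hdeg
    exact ⟨l, hl, hlp.trans (by exact_mod_cast hdeg)⟩
  have := encard_joints_le (d * K) L hlight
  rw [← (finite_joints hd L).cast_ncard_eq] at this
  exact_mod_cast this

lemma ncard_joints_le_mul_rpow_inv (hd : 2 ≤ d) (L : Finset (Set (Fin d → F))) :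
    ((joints L).ncard : ℝ) ≤ d * #L * ((joints L).ncard : ℝ) ^ (d : ℝ)⁻¹ := by
  set m := (joints L).ncard
  have := ncard_joints_le_of_lt_pow hd L _ (lt_floor_rpow_inv_add_one_pow m (by omega))
  calc (m : ℝ) ≤ #L * (d * ⌊(m : ℝ) ^ (d : ℝ)⁻¹⌋₊) := by exact_mod_cast this
    _ ≤ d * #L * (m : ℝ) ^ (d : ℝ)⁻¹ := by
      rw [mul_left_comm, ← mul_assoc]
      gcongr
      exact Nat.floor_le (by positivity)

end Joints

/-- Joints theorem over an arbitrary field: `N` lines in `F^d` form at most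
`C(d) * N^(d/(d-1))` joints. -/
theorem stmt6 (d : ℕ) (hd : 2 ≤ d) :
    ∃ C : ℝ, 0 < C ∧
      ∀ (F : Type) [Field F] (L : Finset (Set (Fin d → F))),
        (∀ l ∈ L, IsLine l) →
        ∀ J : Set (Fin d → F),
          J = {P | ∃ v : Fin d → (Fin d → F),
                LinearIndependent F v ∧ ∀ i, lineThrough P (v i) ∈ L} →
          J.Finite ∧ (J.ncard : ℝ) ≤ C * (L.card : ℝ) ^ ((d : ℝ) / ((d : ℝ) - 1)) := by
  refine ⟨(d : ℝ) ^ 2, by positivity, fun F _ L _ J hJ => ?_⟩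
  obtain rfl : J = joints L := hJ
  refine ⟨finite_joints hd L, ?_⟩
  have hd2 : (2 : ℝ) ≤ d := by exact_mod_cast hd
  have hexp : (d : ℝ) / (d - 1) ≤ 2 := by
    rw [div_le_iff₀ (by linarith)]
    linarith
  calc ((joints L).ncard : ℝ) ≤ (d * #L) ^ ((d : ℝ) / (d - 1)) :=
        le_rpow_of_le_mul_rpow_inv hd (by positivity) (by positivity)
          (ncard_joints_le_mul_rpow_inv hd L)
    _ = d ^ ((d : ℝ) / (d - 1)) * (#L : ℝ) ^ ((d : ℝ) / (d - 1)) :=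
        Real.mul_rpow (by positivity) (by positivity)
    _ ≤ (d : ℝ) ^ 2 * (#L : ℝ) ^ ((d : ℝ) / (d - 1)) := by
      gcongr
      exact (Real.rpow_le_rpow_of_exponent_le (by linarith) hexp).trans_eq (Real.rpow_two _)
end

section
/- The joints-with-multiplicity theorem implies Carbery's conjecture: if for every finite sequence of N lines in F^d one has Σ_P M(P)^(1/(d-1)) ≤ C(d) N^(d/(d-1)), then for any d families L_1,...,L_d of lines with |L_i| = N_i > 0 one has Σ_P μ(P)^(1/(d-1)) ≤ C'(d) (Π_i N_i)^(1/(d-1)). -/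
noncomputable def jointMult {F : Type} [Field F] {d N : ℕ}
    (l : Fin N → Set (Fin d → F)) (P : Fin d → F) : ℕ :=
  Set.ncard {ι : Fin d → Fin N |
    ∃ v : Fin d → (Fin d → F), LinearIndependent F v ∧
      ∀ j, l (ι j) = lineThrough P (v j)}

noncomputable def multijointMult {F : Type} [Field F] {d : ℕ}
    (L : Fin d → Finset (Set (Fin d → F))) (P : Fin d → F) : ℕ :=
  Set.ncard {l : Fin d → Set (Fin d → F) |
    ∃ v : Fin d → (Fin d → F), LinearIndependent F v ∧
      ∀ i, l i ∈ L i ∧ l i = lineThrough P (v i)}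

/-!
Repeat every line of `L i` exactly `∏_{j ≠ i} |L j|` times. The resulting single family has
`d · ∏ |L i|` lines, and each multijoint tuple at `P`, combined with an independent choice of
copy in each direction, yields a distinct joint tuple of the new family at `P`; so
`μ(P) · (∏ |L i|)^(d-1) ≤ M(P)`. Taking `(d-1)`-th roots and summing, the joints bound for the
new family gives `(∏ |L i|) · Σ_P μ(P)^(1/(d-1)) ≤ C (d ∏ |L i|)^(d/(d-1))`.
-/

open Finset

theorem Finset.prod_prod_erase_eq_pow {ι M : Type*} [Fintype ι] [DecidableEq ι] [CommMonoid M]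
    (f : ι → M) : ∏ i, ∏ j ∈ univ.erase i, f j = (∏ i, f i) ^ (Fintype.card ι - 1) := by
  rw [prod_comm' (t' := univ) (s' := fun j => univ.erase j) (by simp [eq_comm])]
  simp [prod_const, card_erase_of_mem, prod_pow]

section Multiplicity

variable {F : Type} [Field F] {d : ℕ}

theorem multijointMult_mul_prod_le_jointMult {N : ℕ} (L : Fin d → Finset (Set (Fin d → F)))
    (k : Fin d → ℕ) (l : Fin N → Set (Fin d → F)) (g : ∀ i, ↥(L i) × Fin (k i) → Fin N)
    (hg : ∀ i, Function.Injective (g i)) (hl : ∀ i x, l (g i x) = x.1) (P : Fin d → F) :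
    multijointMult L P * ∏ i, k i ≤ jointMult l P := by
  set A := {m : Fin d → Set (Fin d → F) | ∃ v : Fin d → (Fin d → F), LinearIndependent F v ∧
    ∀ i, m i ∈ L i ∧ m i = lineThrough P (v i)}
  set B := {ι : Fin d → Fin N | ∃ v : Fin d → (Fin d → F), LinearIndependent F v ∧
    ∀ j, l (ι j) = lineThrough P (v j)}
  have mem_L : ∀ (m : A) i, m.1 i ∈ L i := fun m i => by
    obtain ⟨v, -, hv⟩ := m.2
    exact (hv i).1
  let lift : A × (∀ i, Fin (k i)) → B := fun x =>
    ⟨fun j => g j (⟨x.1.1 j, mem_L x.1 j⟩, x.2 j), by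
      obtain ⟨v, hv, hlv⟩ := x.1.2
      exact ⟨v, hv, fun j => (hl j _).trans (hlv j).2⟩⟩
  have lift_injective : Function.Injective lift := by
    rintro ⟨m₁, c₁⟩ ⟨m₂, c₂⟩ h
    have hj : ∀ j, (⟨m₁.1 j, mem_L m₁ j⟩, c₁ j) = ((⟨m₂.1 j, mem_L m₂ j⟩, c₂ j) : ↥(L j) × _) :=
      fun j => hg j (congrFun (congrArg Subtype.val h) j)
    simp only [Prod.mk.injEq, Subtype.mk.injEq] at hj
    exact Prod.ext (Subtype.ext (funext fun j => (hj j).1)) (funext fun j => (hj j).2)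
  calc multijointMult L P * ∏ i, k i = Nat.card (A × ∀ i, Fin (k i)) := by
        simp [multijointMult, A, Nat.card_coe_set_eq]
    _ ≤ Nat.card B := Nat.card_le_card_of_injective lift lift_injective
    _ = jointMult l P := Nat.card_coe_set_eq B

theorem exists_family_multijointMult_mul_prod_le_jointMult
    (L : Fin d → Finset (Set (Fin d → F))) (k : Fin d → ℕ) :
    ∃ (N : ℕ) (l : Fin N → Set (Fin d → F)), (∀ n, ∃ i, l n ∈ L i) ∧
      N = ∑ i, (L i).card * k i ∧ ∀ P, multijointMult L P * ∏ i, k i ≤ jointMult l P := by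
  let e := (Fintype.equivFin (Σ i, ↥(L i) × Fin (k i))).symm
  refine ⟨_, fun n => (e n).2.1, fun n => ⟨(e n).1, (e n).2.1.2⟩, by simp [Fintype.card_sigma],
    multijointMult_mul_prod_le_jointMult L k _ (fun i x => e.symm ⟨i, x⟩)
      (fun i => e.symm.injective.comp sigma_mk_injective) fun i x => by
        show ((e (e.symm ⟨i, x⟩)).2.1 : Set (Fin d → F)) = x.1
        rw [e.apply_symm_apply]⟩

end Multiplicity

theorem sum_rpow_le_of_mul_pow_le {ι : Type*} (s : Finset ι) {m J : ι → ℝ} {d : ℕ} (hd : 2 ≤ d)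
    {C p : ℝ} (hp : 0 < p) (hm : ∀ P, 0 ≤ m P) (hmJ : ∀ P, m P * p ^ (d - 1) ≤ J P)
    (hJ : ∑ P ∈ s, J P ^ ((1 : ℝ) / ((d : ℝ) - 1)) ≤ C * (d * p) ^ ((d : ℝ) / ((d : ℝ) - 1))) :
    ∑ P ∈ s, m P ^ ((1 : ℝ) / ((d : ℝ) - 1)) ≤
      C * (d : ℝ) ^ ((d : ℝ) / ((d : ℝ) - 1)) * p ^ ((1 : ℝ) / ((d : ℝ) - 1)) := by
  have hd1 : (0 : ℝ) < (d : ℝ) - 1 := by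
    have : (2 : ℝ) ≤ d := by exact_mod_cast hd
    linarith
  set α : ℝ := 1 / ((d : ℝ) - 1)
  have hpow : (p ^ (d - 1)) ^ α = p := by
    rw [← Real.rpow_natCast, ← Real.rpow_mul hp.le, Nat.cast_sub (by omega), Nat.cast_one,
      mul_one_div_cancel hd1.ne', Real.rpow_one]
  have hβ : (d : ℝ) / ((d : ℝ) - 1) = 1 + α := by
    rw [one_add_div hd1.ne', sub_add_cancel]
  have pointwise : ∀ P, m P ^ α * p ≤ J P ^ α := fun P => by
    calc m P ^ α * p = (m P * p ^ (d - 1)) ^ α := by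
          rw [Real.mul_rpow (hm P) (by positivity), hpow]
      _ ≤ J P ^ α := Real.rpow_le_rpow (by have := hm P; positivity) (hmJ P) (by positivity)
  refine le_of_mul_le_mul_right ?_ hp
  calc (∑ P ∈ s, m P ^ α) * p ≤ ∑ P ∈ s, J P ^ α := by
        rw [sum_mul]
        exact sum_le_sum fun P _ => pointwise P
    _ ≤ C * (d * p) ^ ((d : ℝ) / ((d : ℝ) - 1)) := hJ
    _ = C * (d : ℝ) ^ ((d : ℝ) / ((d : ℝ) - 1)) * p ^ α * p := by
        rw [Real.mul_rpow (by positivity) hp.le, hβ, Real.rpow_add hp, Real.rpow_one]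
        ring

/-- The joints-with-multiplicity theorem implies Carbery's conjecture. -/
theorem stmt10 (d : ℕ) (hd : 2 ≤ d) (C : ℝ) (hC : 0 < C)
    (hjoints : ∀ (F : Type) [Field F] (N : ℕ) (l : Fin N → Set (Fin d → F)),
      (∀ i, IsLine (l i)) →
      ∀ s : Finset (Fin d → F),
        ∑ P ∈ s, (jointMult l P : ℝ) ^ ((1 : ℝ) / ((d : ℝ) - 1)) ≤
          C * (N : ℝ) ^ ((d : ℝ) / ((d : ℝ) - 1))) :
    ∃ C' : ℝ, 0 < C' ∧
      ∀ (F : Type) [Field F] (L : Fin d → Finset (Set (Fin d → F))),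
        (∀ i, ∀ l ∈ L i, IsLine l) → (∀ i, (L i).Nonempty) →
        ∀ s : Finset (Fin d → F),
          ∑ P ∈ s, (multijointMult L P : ℝ) ^ ((1 : ℝ) / ((d : ℝ) - 1)) ≤
            C' * (∏ i, ((L i).card : ℝ)) ^ ((1 : ℝ) / ((d : ℝ) - 1)) := by
  refine ⟨C * (d : ℝ) ^ ((d : ℝ) / ((d : ℝ) - 1)), by positivity, ?_⟩
  intro F _ L hL hne s
  set p := ∏ i, (L i).card
  have hp : 0 < p := prod_pos fun i _ => card_pos.mpr (hne i)
  obtain ⟨N, l, hlL, hN, hmult⟩ :=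
    exists_family_multijointMult_mul_prod_le_jointMult L fun i => ∏ j ∈ univ.erase i, (L j).card
  have hN' : N = d * p := by
    simp [hN, fun i => mul_prod_erase univ (fun j => (L j).card) (mem_univ i), p]
  subst hN'
  rw [prod_prod_erase_eq_pow, Fintype.card_fin] at hmult
  have hjoints' := hjoints F _ l (fun n => (hlL n).elim fun i hi => hL i _ hi) s
  push_cast at hjoints'
  rw [← Nat.cast_prod]
  exact sum_rpow_le_of_mul_pow_le s (m := fun P => multijointMult L P)
    (J := fun P => jointMult l P) hd (by exact_mod_cast hp) (fun P => by positivity)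
    (fun P => by exact_mod_cast hmult P) hjoints'
end

section
/- Let L = (l_1,...,l_N) be a finite sequence of lines in F^d and let P be a point with M(P) > 0 (some d lines of L form a joint at P). Then there exists a complete flag of linear subspaces V_1(P) ⊆ V_2(P) ⊆ ··· ⊆ V_d(P) ⊆ V_{d+1}(P) = F^d with dim V_j(P) = j - 1 such that: (b) for each 1 ≤ j ≤ d, the number of indices i with P ∈ l_i and l_i not parallel to V_j(P) is at most C(d) * r_j(P,L) (and at least r_j(P,L)); and (c) for each 1 ≤ j ≤ d and every (j-1)-dimensional subspace V of V_{j+1}(P), the number of lines through P parallel to V is at most the number of lines through P parallel to V_j(P). -/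
/-- A line is parallel to a linear subspace `V` if its direction lies in `V`. -/
def LineParallel {F : Type} [Field F] {d : ℕ} (s : Set (Fin d → F))
    (V : Submodule F (Fin d → F)) : Prop :=
  ∃ a v : Fin d → F, v ≠ 0 ∧ s = {x | ∃ t : F, x = a + t • v} ∧ v ∈ V

/-- The `j`-th minimum `r_j(P, L)`: the minimum over `(j-1)`-dimensional linear
subspaces `V` of the number of indices `i` with `P ∈ l_i` and `l_i` not
parallel to `V`. -/
noncomputable def jthMin {F : Type} [Field F] {d N : ℕ}
    (l : Fin N → Set (Fin d → F)) (P : Fin d → F) (j : ℕ) : ℕ :=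
  sInf {k : ℕ | ∃ V : Submodule F (Fin d → F), Module.finrank F V = j - 1 ∧
    k = Set.ncard {i : Fin N | P ∈ l i ∧ ¬ LineParallel (l i) V}}

/-!
Build the flag from the top down: `V_{d+1} = F^d`, and `V_j` minimizes the number of lines
through `P` not parallel to it among the hyperplanes of `V_{j+1}` (equivalently, maximizes the
number of parallel ones, which gives (c)). If `U` realizes `r_j`, some hyperplane of `V_{j+1}`
contains `U ⊓ V_{j+1}`; a line parallel to both `U` and `V_{j+1}` is parallel to `U ⊓ V_{j+1}`,
so the count for `V_j` is at most `r_j` plus the count for `V_{j+1}`. Since `r_j` is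
nonincreasing in `j`, induction gives the bound `(d + 1 - j) r_j ≤ d r_j`.
-/

open Module

section Flag

variable {K E : Type*} [DivisionRing K] [AddCommGroup E] [Module K E] (f : Submodule K E → ℕ)

noncomputable def rankMin (m : ℕ) : ℕ :=
  sInf {k | ∃ V : Submodule K E, finrank K V = m ∧ k = f V}

theorem rankMin_le {V : Submodule K E} {m : ℕ} (hV : finrank K V = m) : rankMin f m ≤ f V :=
  Nat.sInf_le ⟨V, hV, rfl⟩

variable [FiniteDimensional K E]

theorem Submodule.exists_finrank_eq_of_le {W U : Submodule K E} (hWU : W ≤ U) {m : ℕ}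
    (h₁ : finrank K W ≤ m) (h₂ : m ≤ finrank K U) :
    ∃ W', W ≤ W' ∧ W' ≤ U ∧ finrank K W' = m := by
  obtain ⟨k, rfl⟩ := Nat.exists_eq_add_of_le h₁
  induction k with
  | zero => exact ⟨W, le_rfl, hWU, rfl⟩
  | succ k ih =>
    obtain ⟨W', hWW', hW'U, hW'⟩ := ih (by omega) (by omega)
    obtain ⟨v, hvU, hvW'⟩ := SetLike.exists_of_lt (lt_of_le_of_ne hW'U (by rintro rfl; omega))
    refine ⟨W' ⊔ K ∙ v, hWW'.trans le_sup_left,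
      sup_le hW'U ((Submodule.span_singleton_le_iff_mem v U).2 hvU), ?_⟩
    rw [Submodule.finrank_sup_span_singleton hvW', hW', add_assoc]

theorem Submodule.exists_le_finrank_eq {U : Submodule K E} {m : ℕ} (hm : m ≤ finrank K U) :
    ∃ W ≤ U, finrank K W = m := by
  obtain ⟨W, -, hWU, hW⟩ := exists_finrank_eq_of_le bot_le (by simp) hm
  exact ⟨W, hWU, hW⟩

theorem exists_finrank_eq_rankMin {m : ℕ} (hm : m ≤ finrank K E) :
    ∃ V : Submodule K E, finrank K V = m ∧ f V = rankMin f m := by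
  obtain ⟨W, -, hW⟩ := (⊤ : Submodule K E).exists_le_finrank_eq (m := m) (by rwa [finrank_top])
  obtain ⟨V, hV, hVf⟩ := Nat.sInf_mem
    (s := {k | ∃ V : Submodule K E, finrank K V = m ∧ k = f V}) ⟨f W, W, hW, rfl⟩
  exact ⟨V, hV, hVf.symm⟩

theorem rankMin_anti (hf : Antitone f) {m m' : ℕ} (hmm' : m ≤ m') (hm' : m' ≤ finrank K E) :
    rankMin f m' ≤ rankMin f m := by
  obtain ⟨V, hV, hVf⟩ := exists_finrank_eq_rankMin f (hmm'.trans hm')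
  obtain ⟨V', hVV', -, hV'⟩ :=
    Submodule.exists_finrank_eq_of_le (m := m') le_top (hV.trans_le hmm') (by rwa [finrank_top])
  exact (rankMin_le f hV').trans (hVf ▸ hf hVV')

noncomputable def minimizingHyperplane (U : Submodule K E) : Submodule K E :=
  Function.argminOn f {W | W ≤ U ∧ finrank K W = finrank K U - 1}
    (Submodule.exists_le_finrank_eq (Nat.sub_le _ _))

theorem minimizingHyperplane_mem (U : Submodule K E) :
    minimizingHyperplane f U ∈ {W | W ≤ U ∧ finrank K W = finrank K U - 1} :=
  Function.argminOn_mem f _ _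

theorem minimizingHyperplane_le (U : Submodule K E) : minimizingHyperplane f U ≤ U :=
  (minimizingHyperplane_mem f U).1

theorem finrank_minimizingHyperplane (U : Submodule K E) :
    finrank K (minimizingHyperplane f U) = finrank K U - 1 :=
  (minimizingHyperplane_mem f U).2

theorem apply_minimizingHyperplane_le {U W : Submodule K E} (hWU : W ≤ U)
    (hW : finrank K W = finrank K U - 1) : f (minimizingHyperplane f U) ≤ f W :=
  Function.argminOn_le f {W | W ≤ U ∧ finrank K W = finrank K U - 1} ⟨hWU, hW⟩

theorem apply_minimizingHyperplane_le_rankMin_add (hf : Antitone f)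
    (hinf : ∀ U W, f (U ⊓ W) ≤ f U + f W) (U : Submodule K E) :
    f (minimizingHyperplane f U) ≤ rankMin f (finrank K U - 1) + f U := by
  obtain ⟨V, hV, hVf⟩ :=
    exists_finrank_eq_rankMin f (m := finrank K U - 1) ((Nat.sub_le _ _).trans U.finrank_le)
  obtain ⟨W, hVW, hWU, hW⟩ := Submodule.exists_finrank_eq_of_le (inf_le_right : V ⊓ U ≤ U)
    ((Submodule.finrank_mono inf_le_left).trans hV.le) (Nat.sub_le _ _)
  calc f (minimizingHyperplane f U) ≤ f W := apply_minimizingHyperplane_le f hWU hW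
    _ ≤ f (V ⊓ U) := hf hVW
    _ ≤ f V + f U := hinf V U
    _ = rankMin f (finrank K U - 1) + f U := by rw [hVf]

noncomputable def greedyFlag : ℕ → Submodule K E
  | 0 => ⊤
  | k + 1 => minimizingHyperplane f (greedyFlag k)

theorem antitone_greedyFlag : Antitone (greedyFlag f) :=
  antitone_nat_of_succ_le fun k => minimizingHyperplane_le f (greedyFlag f k)

theorem finrank_greedyFlag (k : ℕ) : finrank K (greedyFlag f k) = finrank K E - k := by
  induction k with
  | zero => exact finrank_top K E
  | succ k ih => rw [greedyFlag, finrank_minimizingHyperplane, ih, Nat.sub_sub]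

theorem apply_greedyFlag_le_mul_rankMin (hf : Antitone f) (hinf : ∀ U W, f (U ⊓ W) ≤ f U + f W)
    (htop : f ⊤ = 0) {k : ℕ} (hk : k ≤ finrank K E) :
    f (greedyFlag f k) ≤ k * rankMin f (finrank K E - k) := by
  induction k with
  | zero => simp [greedyFlag, htop]
  | succ k ih =>
    have hmono := rankMin_anti f hf (Nat.sub_le_sub_left (Nat.le_succ k) _) (Nat.sub_le _ k)
    calc f (greedyFlag f (k + 1))
        ≤ rankMin f (finrank K (greedyFlag f k) - 1) + f (greedyFlag f k) :=
          apply_minimizingHyperplane_le_rankMin_add f hf hinf _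
      _ ≤ rankMin f (finrank K E - (k + 1)) + k * rankMin f (finrank K E - (k + 1)) := by
          rw [finrank_greedyFlag, Nat.sub_sub]
          gcongr
          exact (ih (by omega)).trans (Nat.mul_le_mul_left k hmono)
      _ = (k + 1) * rankMin f (finrank K E - (k + 1)) := by ring

end Flag

section Lines

variable {F : Type} [Field F] {d N : ℕ}

theorem LineParallel.mem {s : Set (Fin d → F)} {V : Submodule F (Fin d → F)} {a v : Fin d → F}
    (h : LineParallel s V) (hs : s = {x | ∃ t : F, x = a + t • v}) : v ∈ V := by
  obtain ⟨b, w, -, rfl, hw⟩ := h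
  obtain ⟨t₀, h₀⟩ : a ∈ {x | ∃ t : F, x = b + t • w} := hs ▸ ⟨0, by simp⟩
  obtain ⟨t₁, h₁⟩ : a + v ∈ {x | ∃ t : F, x = b + t • w} := hs ▸ ⟨1, by simp⟩
  have hv : v = (t₁ - t₀) • w := by rw [sub_smul, ← add_sub_cancel_left a v, h₁, h₀]; abel
  exact hv ▸ V.smul_mem _ hw

theorem LineParallel.inf {s : Set (Fin d → F)} {U V : Submodule F (Fin d → F)}
    (hU : LineParallel s U) (hV : LineParallel s V) : LineParallel s (U ⊓ V) :=
  let ⟨a, v, hv, hs, hvU⟩ := hU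
  ⟨a, v, hv, hs, hvU, hV.mem hs⟩

theorem LineParallel.mono {s : Set (Fin d → F)} {U V : Submodule F (Fin d → F)}
    (h : LineParallel s U) (hUV : U ≤ V) : LineParallel s V :=
  let ⟨a, v, hv, hs, hvU⟩ := h
  ⟨a, v, hv, hs, hUV hvU⟩

theorem IsLine.lineParallel_top {s : Set (Fin d → F)} (h : IsLine s) : LineParallel s ⊤ :=
  let ⟨a, v, hv, hs⟩ := h
  ⟨a, v, hv, hs, trivial⟩

noncomputable def nonParallelCount (l : Fin N → Set (Fin d → F)) (P : Fin d → F)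
    (V : Submodule F (Fin d → F)) : ℕ :=
  {i | P ∈ l i ∧ ¬ LineParallel (l i) V}.ncard

variable (l : Fin N → Set (Fin d → F)) (P : Fin d → F)

theorem jthMin_eq_rankMin (j : ℕ) : jthMin l P j = rankMin (nonParallelCount l P) (j - 1) :=
  rfl

theorem antitone_nonParallelCount : Antitone (nonParallelCount l P) :=
  fun _ _ hUV => Set.ncard_le_ncard fun _ ⟨hi, hni⟩ => ⟨hi, fun hp => hni (hp.mono hUV)⟩

theorem nonParallelCount_inf_le (U V : Submodule F (Fin d → F)) :
    nonParallelCount l P (U ⊓ V) ≤ nonParallelCount l P U + nonParallelCount l P V := by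
  refine (Set.ncard_le_ncard ?_).trans (Set.ncard_union_le _ _)
  rintro i ⟨hi, hni⟩
  by_cases hU : LineParallel (l i) U
  · exact Or.inr ⟨hi, fun hV => hni (hU.inf hV)⟩
  · exact Or.inl ⟨hi, hU⟩

theorem nonParallelCount_top (hl : ∀ i, IsLine (l i)) : nonParallelCount l P ⊤ = 0 := by
  simp [nonParallelCount, fun i => (hl i).lineParallel_top]

theorem ncard_parallel_add_nonParallelCount (V : Submodule F (Fin d → F)) :
    {i | P ∈ l i ∧ LineParallel (l i) V}.ncard + nonParallelCount l P V = {i | P ∈ l i}.ncard :=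
  Set.ncard_inter_add_ncard_sdiff_eq_ncard _ _

theorem ncard_parallel_le_of_nonParallelCount_le {V W : Submodule F (Fin d → F)}
    (h : nonParallelCount l P V ≤ nonParallelCount l P W) :
    {i | P ∈ l i ∧ LineParallel (l i) W}.ncard ≤ {i | P ∈ l i ∧ LineParallel (l i) V}.ncard := by
  have hV := ncard_parallel_add_nonParallelCount l P V
  have hW := ncard_parallel_add_nonParallelCount l P W
  omega

end Lines

/-- Existence of a good flag at each joint `P`: a complete flag
`V_1 ⊆ ⋯ ⊆ V_d ⊆ V_{d+1} = F^d` with `dim V_j = j - 1`, such that (b) the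
number of lines of `L` through `P` not parallel to `V_j` is between
`r_j(P, L)` and `C(d) r_j(P, L)`, and (c) among `(j-1)`-dimensional subspaces
of `V_{j+1}`, the subspace `V_j` maximizes the number of lines through `P`
parallel to it. -/
theorem stmt13 (d : ℕ) (hd : 2 ≤ d) :
    ∃ C : ℝ, 0 < C ∧
      ∀ (F : Type) [Field F] (N : ℕ) (l : Fin N → Set (Fin d → F)),
        (∀ i, IsLine (l i)) →
        ∀ P : Fin d → F, 0 < jointMult l P →
          ∃ V : ℕ → Submodule F (Fin d → F),
            (∀ j, 1 ≤ j → j ≤ d → V j ≤ V (j + 1)) ∧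
            (∀ j, 1 ≤ j → j ≤ d → Module.finrank F (V j) = j - 1) ∧
            V (d + 1) = ⊤ ∧
            (∀ j, 1 ≤ j → j ≤ d →
              (jthMin l P j : ℝ) ≤
                  (Set.ncard {i : Fin N | P ∈ l i ∧ ¬ LineParallel (l i) (V j)} : ℝ) ∧
              (Set.ncard {i : Fin N | P ∈ l i ∧ ¬ LineParallel (l i) (V j)} : ℝ) ≤
                  C * (jthMin l P j : ℝ)) ∧
            (∀ j, 1 ≤ j → j ≤ d → ∀ W : Submodule F (Fin d → F),
              W ≤ V (j + 1) → Module.finrank F W = j - 1 →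
              Set.ncard {i : Fin N | P ∈ l i ∧ LineParallel (l i) W} ≤
                Set.ncard {i : Fin N | P ∈ l i ∧ LineParallel (l i) (V j)}) := by
  refine ⟨d, by exact_mod_cast (by omega : 0 < d), fun F _ N l hl P _ => ?_⟩
  set f := nonParallelCount l P
  have hrank (k : ℕ) : finrank F (greedyFlag f k) = d - k := by
    rw [finrank_greedyFlag, finrank_fin_fun]
  refine ⟨fun j => greedyFlag f (d + 1 - j), fun j _ _ => antitone_greedyFlag f (by omega),
    fun j _ _ => by rw [hrank]; omega, by simp [greedyFlag], fun j hj hjd => ⟨?_, ?_⟩,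
    fun j hj hjd W hW hWr => ncard_parallel_le_of_nonParallelCount_le l P ?_⟩
  · rw [jthMin_eq_rankMin]
    exact_mod_cast rankMin_le f ((hrank _).trans (by omega))
  · have hle := apply_greedyFlag_le_mul_rankMin f (antitone_nonParallelCount l P)
      (nonParallelCount_inf_le l P) (nonParallelCount_top l P hl) (k := d + 1 - j)
      (by rw [finrank_fin_fun]; omega)
    rw [finrank_fin_fun, show d - (d + 1 - j) = j - 1 by omega, ← jthMin_eq_rankMin] at hle
    exact_mod_cast hle.trans (Nat.mul_le_mul_right _ (by omega))
  · show f (greedyFlag f (d + 1 - j)) ≤ f W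
    rw [show d + 1 - j = d + 1 - (j + 1) + 1 by omega]
    exact apply_minimizingHyperplane_le f hW (by rw [hrank, hWr]; omega)
end

section
/- Let Q be a nonzero polynomial in F[x_1,...,x_d], P a point, and l a line through P with direction v. Define the (P,l)-multiplicity m_Q(P,l) via any affine transform T sending P onto the x_d-axis and l to the x_d-axis: write (T^{-1})^*Q = Σ_α x^{(α,0)} f_α(x_d), take all 'lowest' α (with f_α ≠ 0 and |α| minimal), and let m_Q(P,l) be the minimal multiplicity of the x_d-coordinate of T(P) as a root of f_α over lowest α. Then m_Q(P,l) is independent of the choice of T. -/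
open MvPolynomial

noncomputable def affPull {F : Type} [Field F] {d : ℕ}
    (M : Matrix (Fin d) (Fin d) F) (b : Fin d → F)
    (Q : MvPolynomial (Fin d) F) : MvPolynomial (Fin d) F :=
  MvPolynomial.aeval
    (fun i : Fin d => (∑ j, MvPolynomial.C (M i j) * MvPolynomial.X j) + MvPolynomial.C (b i)) Q

/-- Affine map `x ↦ M x + b` (the inverse of a transform `T`) sends the
`x_d`-axis onto the line `{a + t v}` and the point `(0, …, 0, p)` to `P`. -/
def SendsAxisTo {F : Type} [Field F] {n : ℕ}
    (M : Matrix (Fin (n + 1)) (Fin (n + 1)) F) (b : Fin (n + 1) → F)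
    (a v P : Fin (n + 1) → F) (p : F) : Prop :=
  IsUnit M.det ∧ (∃ t : F, b = a + t • v) ∧
    (∃ c : F, M.mulVec (Pi.single (Fin.last n) 1) = c • v) ∧
    M.mulVec (Pi.single (Fin.last n) p) + b = P

open scoped Polynomial Matrix

/-!
View a polynomial in `x_1, …, x_d` as a polynomial in `x_1, …, x_{d-1}` with coefficients in
`F[x_d]` (`splitLast`): the lowest `α` are its monomials of least degree, and `axisMult` is the
least root multiplicity at `p` among their coefficients. Two admissible transforms differ by an
affine change `x ↦ A x + c` preserving the `x_d`-axis. It substitutes for each `x_i`, `i < d`, a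
linear form in `x_1, …, x_{d-1}` alone, and for `x_d` such a linear form plus `λ x_d + μ`. So no
monomial of lower degree appears, and the new lowest coefficients are combinations of the old
ones composed with `λ x_d + μ`, which turns a root `p` of multiplicity `e` into a root `p'` of
multiplicity at least `e`. The change back gives the reverse inequalities.
-/

namespace MvPolynomial

variable {σ τ R S : Type*} [CommSemiring R] [CommSemiring S]

noncomputable def lowestDegree (G : MvPolynomial σ R) : ℕ :=
  sInf (Finsupp.degree '' (G.support : Set (σ →₀ ℕ)))

lemma lowestDegree_le {G : MvPolynomial σ R} {d : σ →₀ ℕ} (hd : G.coeff d ≠ 0) :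
    G.lowestDegree ≤ d.degree :=
  Nat.sInf_le ⟨d, mem_support_iff.mpr hd, rfl⟩

lemma exists_degree_eq_lowestDegree {G : MvPolynomial σ R} (hG : G ≠ 0) :
    ∃ d, G.coeff d ≠ 0 ∧ d.degree = G.lowestDegree := by
  obtain ⟨d, hd⟩ := ne_zero_iff.mp hG
  obtain ⟨d₀, hd₀, hdeg⟩ := Nat.sInf_mem
    (⟨d.degree, d, mem_support_iff.mpr hd, rfl⟩ :
      (Finsupp.degree '' (G.support : Set _)).Nonempty)
  exact ⟨d₀, mem_support_iff.mp hd₀, hdeg⟩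

lemma IsHomogeneous.coeff_mul_eq_zero_of_degree_lt {H : MvPolynomial τ S} {k : ℕ}
    (hH : H.IsHomogeneous k) (f : MvPolynomial τ S) {d : τ →₀ ℕ} (hd : d.degree < k) :
    (f * H).coeff d = 0 := by
  classical
  rw [coeff_mul]
  refine Finset.sum_eq_zero fun x hx => ?_
  rw [Finset.HasAntidiagonal.mem_antidiagonal] at hx
  have : x.2.degree ≠ k := by
    have := congrArg Finsupp.degree hx
    rw [map_add] at this
    omega
  rw [hH.coeff_eq_zero this, mul_zero]

lemma IsHomogeneous.coeff_mul_of_degree_eq {H : MvPolynomial τ S} {k : ℕ}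
    (hH : H.IsHomogeneous k) (f : MvPolynomial τ S) {d : τ →₀ ℕ} (hd : d.degree = k) :
    (f * H).coeff d = constantCoeff f * H.coeff d := by
  classical
  rw [coeff_mul, Finset.sum_eq_single (0, d)]
  · rfl
  · rintro x hx hx0
    rw [Finset.HasAntidiagonal.mem_antidiagonal] at hx
    by_cases hx2 : x.2.degree = k
    · have : x.1 = 0 := by
        rw [← Finsupp.degree_eq_zero_iff]
        have := congrArg Finsupp.degree hx
        rw [map_add] at this
        omega
      exact absurd (Prod.ext this (by simpa [this] using hx)) hx0
    · rw [hH.coeff_eq_zero hx2, mul_zero]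
  · simp

lemma isHomogeneous_finsuppProd_pow {g : σ → MvPolynomial τ S}
    (hg : ∀ i, (g i).IsHomogeneous 1) (d : σ →₀ ℕ) :
    (d.prod fun i k => g i ^ k).IsHomogeneous d.degree := by
  simpa [Finsupp.prod, Finsupp.degree_apply] using
    IsHomogeneous.prod _ _ _ fun i _ => (hg i).pow (d i)

section eval₂Hom

variable {φ : R →+* MvPolynomial τ S} {g : σ → MvPolynomial τ S}

lemma coeff_eval₂Hom_eq_zero_of_degree_lt (hg : ∀ i, (g i).IsHomogeneous 1)
    (G : MvPolynomial σ R) {d : τ →₀ ℕ} (hd : d.degree < G.lowestDegree) :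
    (eval₂Hom φ g G).coeff d = 0 := by
  conv_lhs => rw [G.as_sum]
  rw [map_sum, coeff_sum]
  refine Finset.sum_eq_zero fun e he => ?_
  rw [eval₂Hom_monomial]
  exact (isHomogeneous_finsuppProd_pow hg e).coeff_mul_eq_zero_of_degree_lt _
    (hd.trans_le (lowestDegree_le (mem_support_iff.mp he)))

lemma lowestDegree_le_lowestDegree_eval₂Hom (hg : ∀ i, (g i).IsHomogeneous 1)
    {G : MvPolynomial σ R} (hG : eval₂Hom φ g G ≠ 0) :
    G.lowestDegree ≤ (eval₂Hom φ g G).lowestDegree := by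
  obtain ⟨d, hd, hdeg⟩ := exists_degree_eq_lowestDegree hG
  by_contra! hlt
  exact hd (coeff_eval₂Hom_eq_zero_of_degree_lt hg G (hdeg ▸ hlt))

/- In degree `G.lowestDegree`, only the lowest monomials of `G` contribute to `eval₂Hom φ g G`,
and only through the constant terms of the images of their coefficients. -/
lemma dvd_coeff_eval₂Hom (hg : ∀ i, (g i).IsHomogeneous 1) {G : MvPolynomial σ R} {r : S}
    (hr : ∀ e : σ →₀ ℕ, e.degree = G.lowestDegree → r ∣ constantCoeff (φ (G.coeff e)))
    {d : τ →₀ ℕ} (hd : d.degree = G.lowestDegree) :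
    r ∣ (eval₂Hom φ g G).coeff d := by
  conv_rhs => rw [G.as_sum]
  rw [map_sum, coeff_sum]
  refine Finset.dvd_sum fun e he => ?_
  have hle := lowestDegree_le (mem_support_iff.mp he)
  have hhom := isHomogeneous_finsuppProd_pow hg e
  rw [eval₂Hom_monomial]
  rcases hle.lt_or_eq with hlt | heq
  · rw [hhom.coeff_mul_eq_zero_of_degree_lt _ (by omega)]
    exact dvd_zero r
  · rw [hhom.coeff_mul_of_degree_eq _ (by omega)]
    exact (hr e heq.symm).mul_right _

end eval₂Hom

section RootMultiplicity

variable {K : Type*} [CommRing K]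

noncomputable def lowestRootMultiplicity (G : MvPolynomial σ K[X]) (p : K) : ℕ :=
  sInf {m | ∃ d, G.coeff d ≠ 0 ∧ d.degree = G.lowestDegree ∧
    m = (G.coeff d).rootMultiplicity p}

lemma le_lowestRootMultiplicity_iff {G : MvPolynomial σ K[X]} (hG : G ≠ 0) {p : K} {e : ℕ} :
    e ≤ G.lowestRootMultiplicity p ↔
      ∀ d : σ →₀ ℕ, d.degree = G.lowestDegree →
        (Polynomial.X - Polynomial.C p) ^ e ∣ G.coeff d := by
  constructor
  · intro he d hd
    by_cases hd0 : G.coeff d = 0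
    · rw [hd0]
      exact dvd_zero _
    · exact (pow_dvd_pow _ (he.trans (Nat.sInf_le ⟨d, hd0, hd, rfl⟩))).trans
        (Polynomial.pow_rootMultiplicity_dvd _ p)
  · intro he
    obtain ⟨d, hd, hdeg⟩ := exists_degree_eq_lowestDegree hG
    obtain ⟨d₀, hd₀, hdeg₀, hm⟩ := Nat.sInf_mem
      (⟨_, d, hd, hdeg, rfl⟩ : {m | ∃ d, G.coeff d ≠ 0 ∧ d.degree = G.lowestDegree ∧
        m = (G.coeff d).rootMultiplicity p}.Nonempty)
    rw [lowestRootMultiplicity, hm, Polynomial.le_rootMultiplicity_iff hd₀]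
    exact he d₀ hdeg₀

lemma lowestRootMultiplicity_le_eval₂Hom {φ : K[X] →+* MvPolynomial τ K[X]}
    {g : σ → MvPolynomial τ K[X]} (hg : ∀ i, (g i).IsHomogeneous 1) {G : MvPolynomial σ K[X]}
    (hG : G ≠ 0) (hφG : eval₂Hom φ g G ≠ 0)
    (hdeg : (eval₂Hom φ g G).lowestDegree ≤ G.lowestDegree) {p p' : K}
    (hφ : Polynomial.X - Polynomial.C p' ∣ constantCoeff (φ (Polynomial.X - Polynomial.C p))) :
    G.lowestRootMultiplicity p ≤ (eval₂Hom φ g G).lowestRootMultiplicity p' := by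
  rw [le_lowestRootMultiplicity_iff hφG]
  intro d hd
  have hlow := hdeg.antisymm (lowestDegree_le_lowestDegree_eval₂Hom hg hφG)
  refine dvd_coeff_eval₂Hom hg (fun e he => ?_) (hd.trans hlow)
  have hpe := (le_lowestRootMultiplicity_iff hG (p := p)).mp le_rfl e he
  exact (pow_dvd_pow_of_dvd hφ _).trans <| by
    simpa only [map_pow, RingHom.comp_apply] using map_dvd (constantCoeff.comp φ) hpe

end RootMultiplicity

end MvPolynomial

section SplitLast

variable {R : Type*} [CommSemiring R] {n : ℕ}

noncomputable def splitLast : MvPolynomial (Fin (n + 1)) R →ₐ[R] MvPolynomial (Fin n) R[X] :=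
  aeval (Fin.snoc X (C Polynomial.X))

lemma splitLast_monomial (α : Fin n → ℕ) (k : ℕ) (r : R) :
    splitLast (monomial (Finsupp.equivFunOnFinite.symm (Fin.snoc α k)) r) =
      monomial (Finsupp.equivFunOnFinite.symm α) (Polynomial.C r * Polynomial.X ^ k) := by
  rw [splitLast, aeval_monomial, monomial_eq, Finsupp.prod_fintype _ _ fun _ => pow_zero _,
    Finsupp.prod_fintype _ _ fun _ => pow_zero _, Fin.prod_univ_castSucc]
  simp only [Finsupp.coe_equivFunOnFinite_symm, Fin.snoc_castSucc, Fin.snoc_last,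
    MvPolynomial.algebraMap_apply, Polynomial.algebraMap_apply, Algebra.algebraMap_self,
    RingHom.id_apply, map_mul, map_pow]
  ring

lemma coeff_coeff_splitLast (Q : MvPolynomial (Fin (n + 1)) R) (α : Fin n → ℕ) (k : ℕ) :
    ((splitLast Q).coeff (Finsupp.equivFunOnFinite.symm α)).coeff k =
      Q.coeff (Finsupp.equivFunOnFinite.symm (Fin.snoc α k)) := by
  classical
  induction Q using MvPolynomial.induction_on' with
  | add Q₁ Q₂ h₁ h₂ => simp only [map_add, coeff_add, Polynomial.coeff_add, h₁, h₂]
  | monomial d r =>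
    obtain ⟨β, j, rfl⟩ : ∃ β j, d = Finsupp.equivFunOnFinite.symm (Fin.snoc β j) :=
      ⟨fun i => d i.castSucc, d (Fin.last n), by ext i; cases i using Fin.lastCases <;> simp⟩
    rw [splitLast_monomial, coeff_monomial, coeff_monomial]
    simp only [EmbeddingLike.apply_eq_iff_eq, Fin.snoc_inj]
    split_ifs <;> simp_all [eq_comm]

lemma splitLast_injective :
    Function.Injective (splitLast : MvPolynomial (Fin (n + 1)) R → _) := by
  intro Q₁ Q₂ h
  ext d
  have hd : d = Finsupp.equivFunOnFinite.symm
      (Fin.snoc (fun i => d i.castSucc) (d (Fin.last n))) := by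
    ext i; cases i using Fin.lastCases <;> simp
  rw [hd, ← coeff_coeff_splitLast, ← coeff_coeff_splitLast, h]

lemma splitLast_ne_zero {Q : MvPolynomial (Fin (n + 1)) R} (hQ : Q ≠ 0) : splitLast Q ≠ 0 :=
  (map_ne_zero_iff _ splitLast_injective).mpr hQ

lemma splitLast_aeval (f : Fin (n + 1) → MvPolynomial (Fin (n + 1)) R)
    (Q : MvPolynomial (Fin (n + 1)) R) :
    splitLast (aeval f Q) = eval₂Hom (Polynomial.aeval (splitLast (f (Fin.last n)))).toRingHom
      (fun i => splitLast (f i.castSucc)) (splitLast Q) := by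
  suffices ((splitLast (n := n)).comp (aeval f)).toRingHom =
      (eval₂Hom _ _).comp (splitLast (R := R) (n := n)).toRingHom from RingHom.congr_fun this Q
  refine ringHom_ext (fun r => ?_) (fun i => ?_)
  · simp [splitLast]
  · cases i using Fin.lastCases <;> simp [splitLast]

lemma splitLast_linear_add_C (w : Fin (n + 1) → R) (s : R) :
    splitLast (∑ j, C (w j) * X j + C s) =
      ∑ j : Fin n, C (Polynomial.C (w j.castSucc)) * X j +
        C (Polynomial.C (w (Fin.last n)) * Polynomial.X + Polynomial.C s) := by
  simp only [splitLast, Fin.sum_univ_castSucc, map_add, map_sum, map_mul, algHom_C,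
    MvPolynomial.algebraMap_apply, Polynomial.algebraMap_eq, aeval_X, Fin.snoc_castSucc,
    Fin.snoc_last]
  ring

lemma constantCoeff_splitLast_linear_add_C (w : Fin (n + 1) → R) (s : R) :
    constantCoeff (splitLast (∑ j, C (w j) * X j + C s)) =
      Polynomial.C (w (Fin.last n)) * Polynomial.X + Polynomial.C s := by
  simp [splitLast_linear_add_C]

end SplitLast

section SliceAt

variable {F : Type} [Field F] {n : ℕ}

lemma sliceAt_eq_coeff_splitLast (Q : MvPolynomial (Fin (n + 1)) F) (α : Fin n → ℕ) :
    sliceAt Q α = (splitLast Q).coeff (Finsupp.equivFunOnFinite.symm α) := by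
  ext k
  rw [coeff_coeff_splitLast, sliceAt, Polynomial.finsetSum_coeff]
  simp only [Polynomial.coeff_C_mul_X_pow, Finset.sum_ite_eq, Finset.mem_range]
  split_ifs with hk
  · rfl
  -- a monomial containing `x_d ^ k` has total degree at least `k`
  refine (coeff_eq_zero_of_totalDegree_lt ?_).symm
  have := Finsupp.le_degree (Fin.last n) (Finsupp.equivFunOnFinite.symm (Fin.snoc α k))
  simp only [Finsupp.coe_equivFunOnFinite_symm, Fin.snoc_last] at this
  rw [← Finsupp.degree_apply]
  omega

lemma isLowest_iff (Q : MvPolynomial (Fin (n + 1)) F) (α : Fin n → ℕ) :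
    IsLowest Q α ↔ (splitLast Q).coeff (Finsupp.equivFunOnFinite.symm α) ≠ 0 ∧
      (Finsupp.equivFunOnFinite.symm α).degree = (splitLast Q).lowestDegree := by
  have hsum (β : Fin n → ℕ) : ∑ i, β i = (Finsupp.equivFunOnFinite.symm β).degree := by
    simp [Finsupp.degree_eq_sum]
  simp only [IsLowest, sliceAt_eq_coeff_splitLast, hsum]
  refine and_congr_right fun hα =>
    ⟨fun hmin => (lowestDegree_le hα).antisymm' ?_, fun hdeg β hβ => ?_⟩
  · obtain ⟨d, hd, hdeg⟩ := exists_degree_eq_lowestDegree (ne_zero_iff.mpr ⟨_, hα⟩)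
    simpa [← hdeg] using hmin d (by simpa using hd)
  · exact hdeg ▸ lowestDegree_le hβ

lemma axisMult_eq_lowestRootMultiplicity (Q : MvPolynomial (Fin (n + 1)) F) (p : F) :
    axisMult Q p = (splitLast Q).lowestRootMultiplicity p := by
  simp only [axisMult, lowestRootMultiplicity, isLowest_iff, sliceAt_eq_coeff_splitLast]
  congr! 1
  ext m
  simp only [Set.mem_ofPred_eq, and_assoc]
  exact (Finsupp.equivFunOnFinite.symm.surjective.exists (p := fun d =>
    coeff d (splitLast Q) ≠ 0 ∧ d.degree = (splitLast Q).lowestDegree ∧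
      m = (coeff d (splitLast Q)).rootMultiplicity p)).symm

end SliceAt

section AffPull

variable {F : Type} [Field F] {d : ℕ}

lemma affPull_affPull (M A : Matrix (Fin d) (Fin d) F) (b c : Fin d → F)
    (Q : MvPolynomial (Fin d) F) :
    affPull A c (affPull M b Q) = affPull (M * A) (M *ᵥ c + b) Q := by
  simp only [affPull, ← AlgHom.comp_apply, comp_aeval]
  congr 2
  funext i
  simp only [aeval_eq_bind₁, map_add, map_sum, map_mul, algHom_C, algebraMap_eq, bind₁_X_right,
    mul_add, Finset.mul_sum, Finset.sum_add_distrib, Matrix.mul_apply, Finset.sum_mul,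
    mul_assoc, Pi.add_apply, Matrix.mulVec, dotProduct]
  rw [Finset.sum_comm, add_assoc]

lemma affPull_one_zero (Q : MvPolynomial (Fin d) F) : affPull 1 0 Q = Q := by
  simp [affPull, Matrix.one_apply, ite_mul]

lemma affPull_ne_zero {M : Matrix (Fin d) (Fin d) F} (hM : IsUnit M.det) (b : Fin d → F)
    {Q : MvPolynomial (Fin d) F} (hQ : Q ≠ 0) : affPull M b Q ≠ 0 := by
  have hinv : affPull M⁻¹ (-(M⁻¹ *ᵥ b)) (affPull M b Q) = Q := by
    rw [affPull_affPull, Matrix.mulVec_neg, Matrix.mulVec_mulVec, Matrix.mul_nonsing_inv M hM,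
      Matrix.one_mulVec, neg_add_cancel, affPull_one_zero]
  intro h
  rw [h, affPull, map_zero] at hinv
  exact hQ hinv.symm

end AffPull

section AxisChange

variable {F : Type} [Field F] {n : ℕ} {A : Matrix (Fin (n + 1)) (Fin (n + 1)) F}
  {c : Fin (n + 1) → F}

lemma isHomogeneous_splitLast_affine_row (hA : ∀ i : Fin n, A i.castSucc (Fin.last n) = 0)
    (hc : ∀ i : Fin n, c i.castSucc = 0) (i : Fin n) :
    (splitLast (∑ j, C (A i.castSucc j) * X j + C (c i.castSucc))).IsHomogeneous 1 := by
  rw [splitLast_linear_add_C, hA, hc]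
  simpa using IsHomogeneous.sum _ _ _ fun j _ => (isHomogeneous_X _ j).C_mul _

lemma lowestDegree_splitLast_le_affPull (hA : ∀ i : Fin n, A i.castSucc (Fin.last n) = 0)
    (hc : ∀ i : Fin n, c i.castSucc = 0) {Q : MvPolynomial (Fin (n + 1)) F}
    (hQ : affPull A c Q ≠ 0) :
    (splitLast Q).lowestDegree ≤ (splitLast (affPull A c Q)).lowestDegree := by
  have hQ' := splitLast_ne_zero hQ
  rw [affPull, splitLast_aeval] at hQ' ⊢
  exact lowestDegree_le_lowestDegree_eval₂Hom (isHomogeneous_splitLast_affine_row hA hc) hQ'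

lemma axisMult_le_axisMult_affPull (hA : ∀ i : Fin n, A i.castSucc (Fin.last n) = 0)
    (hc : ∀ i : Fin n, c i.castSucc = 0) {p p' : F}
    (hp : A (Fin.last n) (Fin.last n) * p' + c (Fin.last n) = p)
    {Q : MvPolynomial (Fin (n + 1)) F} (hQ : Q ≠ 0) (hQ' : affPull A c Q ≠ 0)
    (hdeg : (splitLast (affPull A c Q)).lowestDegree ≤ (splitLast Q).lowestDegree) :
    axisMult Q p ≤ axisMult (affPull A c Q) p' := by
  have hQ'' := splitLast_ne_zero hQ'
  rw [axisMult_eq_lowestRootMultiplicity, axisMult_eq_lowestRootMultiplicity]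
  rw [affPull, splitLast_aeval] at hQ'' hdeg ⊢
  refine lowestRootMultiplicity_le_eval₂Hom (isHomogeneous_splitLast_affine_row hA hc)
    (splitLast_ne_zero hQ) hQ'' hdeg ⟨Polynomial.C (A (Fin.last n) (Fin.last n)), ?_⟩
  rw [AlgHom.toRingHom_eq_coe, RingHom.coe_coe, map_sub, Polynomial.aeval_X, Polynomial.aeval_C,
    map_sub, constantCoeff_splitLast_linear_add_C, MvPolynomial.algebraMap_apply, constantCoeff_C,
    ← hp]
  simp only [Polynomial.algebraMap_eq, map_add, map_mul]
  ring

end AxisChange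

lemma SendsAxisTo.exists_affPull_eq {F : Type} [Field F] {n : ℕ}
    {M M' : Matrix (Fin (n + 1)) (Fin (n + 1)) F} {b b' a v P : Fin (n + 1) → F} {p p' : F}
    (h : SendsAxisTo M b a v P p) (h' : SendsAxisTo M' b' a v P p') :
    ∃ (A : Matrix (Fin (n + 1)) (Fin (n + 1)) F) (c : Fin (n + 1) → F),
      (∀ i : Fin n, A i.castSucc (Fin.last n) = 0) ∧ (∀ i : Fin n, c i.castSucc = 0) ∧
      A (Fin.last n) (Fin.last n) * p' + c (Fin.last n) = p ∧
      ∀ Q, affPull M' b' Q = affPull A c (affPull M b Q) := by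
  obtain ⟨hM, ⟨t, rfl⟩, ⟨s, hs⟩, hP⟩ := h
  obtain ⟨-, ⟨t', rfl⟩, ⟨s', hs'⟩, hP'⟩ := h'
  have hinv (u : Fin (n + 1) → F) : M *ᵥ (M⁻¹ *ᵥ u) = u := by
    rw [Matrix.mulVec_mulVec, Matrix.mul_nonsing_inv M hM, Matrix.one_mulVec]
  have hw : ∀ i : Fin n, (M⁻¹ *ᵥ v) i.castSucc = 0 := by
    have he : Pi.single (Fin.last n) 1 = s • M⁻¹ *ᵥ v := by
      rw [← Matrix.mulVec_smul, ← hs, Matrix.mulVec_mulVec, Matrix.nonsing_inv_mul M hM,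
        Matrix.one_mulVec]
    have hs0 : s ≠ 0 := by
      rintro rfl
      simpa using congrFun he (Fin.last n)
    intro i
    simpa [(Fin.castSucc_lt_last i).ne, hs0] using congrFun he i.castSucc
  refine ⟨M⁻¹ * M', M⁻¹ *ᵥ ((t' - t) • v), fun i => ?_, fun i => ?_, ?_, fun Q => ?_⟩
  · have hcol : (M⁻¹ * M') *ᵥ Pi.single (Fin.last n) 1 = s' • M⁻¹ *ᵥ v := by
      rw [← Matrix.mulVec_mulVec, hs', Matrix.mulVec_smul]
    simpa [hw i] using congrFun hcol i.castSucc
  · simp [Matrix.mulVec_smul, hw i]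
  · have hMp : M' *ᵥ Pi.single (Fin.last n) p' + (t' - t) • v =
        M *ᵥ Pi.single (Fin.last n) p := by
      linear_combination (norm := module) hP' - hP
    have hpt : (M⁻¹ * M') *ᵥ Pi.single (Fin.last n) p' + M⁻¹ *ᵥ ((t' - t) • v) =
        Pi.single (Fin.last n) p := by
      rw [← Matrix.mulVec_mulVec, ← Matrix.mulVec_add, hMp, Matrix.mulVec_mulVec,
        Matrix.nonsing_inv_mul M hM, Matrix.one_mulVec]
    simpa [mul_comm] using congrFun hpt (Fin.last n)
  · rw [affPull_affPull, Matrix.mul_nonsing_inv_cancel_left (h := hM), hinv]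
    congr 1
    module

lemma axisMult_le_of_sendsAxisTo {F : Type} [Field F] {n : ℕ}
    {Q : MvPolynomial (Fin (n + 1)) F} (hQ : Q ≠ 0)
    {M M' : Matrix (Fin (n + 1)) (Fin (n + 1)) F} {b b' a v P : Fin (n + 1) → F} {p p' : F}
    (h : SendsAxisTo M b a v P p) (h' : SendsAxisTo M' b' a v P p') :
    axisMult (affPull M b Q) p ≤ axisMult (affPull M' b' Q) p' := by
  obtain ⟨A, c, hA, hc, hp, hQ'⟩ := h.exists_affPull_eq h'
  obtain ⟨A₁, c₁, hA₁, hc₁, -, hQ₁⟩ := h'.exists_affPull_eq h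
  have hR := affPull_ne_zero h.1 b hQ
  have hR' := affPull_ne_zero h'.1 b' hQ
  have hdeg := lowestDegree_splitLast_le_affPull hA₁ hc₁ (hQ₁ Q ▸ hR)
  rw [← hQ₁, hQ'] at hdeg
  rw [hQ'] at hR' ⊢
  exact axisMult_le_axisMult_affPull hA hc hp hR hR' hdeg

theorem stmt14_general {F : Type} [Field F] {n : ℕ}
    (Q : MvPolynomial (Fin (n + 1)) F) (hQ : Q ≠ 0)
    (a v P : Fin (n + 1) → F)
    (M M' : Matrix (Fin (n + 1)) (Fin (n + 1)) F) (b b' : Fin (n + 1) → F) (p p' : F)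
    (h : SendsAxisTo M b a v P p) (h' : SendsAxisTo M' b' a v P p') :
    axisMult (affPull M b Q) p = axisMult (affPull M' b' Q) p' :=
  (axisMult_le_of_sendsAxisTo hQ h h').antisymm (axisMult_le_of_sendsAxisTo hQ h' h)

/-- The `(P, l)`-multiplicity of `Q` is independent of the choice of affine
transform `T` sending `P` into the `x_d`-axis and `l` to the `x_d`-axis. -/
theorem stmt14 {F : Type} [Field F] {n : ℕ} (hn : 1 ≤ n)
    (Q : MvPolynomial (Fin (n + 1)) F) (hQ : Q ≠ 0)
    (a v P : Fin (n + 1) → F) (hv : v ≠ 0)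
    (M M' : Matrix (Fin (n + 1)) (Fin (n + 1)) F) (b b' : Fin (n + 1) → F) (p p' : F)
    (h : SendsAxisTo M b a v P p) (h' : SendsAxisTo M' b' a v P p') :
    axisMult (affPull M b Q) p = axisMult (affPull M' b' Q) p' :=
  stmt14_general Q hQ a v P M M' b b' p p' h h'
end
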